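/- Equivalence of the Ginzburg–Landau energy and the hydrodynamical norm near the vacuum. There exist C ≥ 1 and δ ∈ (0,1) (depending only on f) such that for all (η,v) ∈ H¹(ℝ;ℝ) × L²(ℝ;ℝ) with ‖η‖_{L∞(ℝ)} ≤ δ, one has (1/C)(‖η‖²_{H¹} + ‖v‖²_{L²}) ≤ E(η,v) ≤ C(‖η‖²_{H¹} + ‖v‖²_{L²}). -/

import Mathlib

open MeasureTheory Real Filter Topology Set intervalIntegral

noncomputable section

/-- The primitive `F(ρ) = ∫_ρ^1 f(r) dr`. -/
def Fprim (f : ℝ → ℝ) (ρ : ℝ) : ℝ := ∫ r in ρ..1, f r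

/-- The sound speed `c_s = √(−2 f'(1))`. -/
def soundSpeed (f : ℝ → ℝ) : ℝ := Real.sqrt (-2 * deriv f 1)

/-- Squared `L²(ℝ)` norm. -/
def l2sq (g : ℝ → ℝ) : ℝ := ∫ x : ℝ, (g x) ^ 2

/-- The Ginzburg–Landau energy in hydrodynamical form. -/
def EGL (f : ℝ → ℝ) (η v : ℝ → ℝ) : ℝ :=
  (1 / 8) * (∫ x : ℝ, (deriv η x) ^ 2 / (1 - η x))
    + (1 / 2) * (∫ x : ℝ, (1 - η x) * (v x) ^ 2)
    + (1 / 2) * (∫ x : ℝ, Fprim f (1 - η x))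

/-- **Equivalence of the Ginzburg–Landau energy and the hydrodynamical norm near the
vacuum**: there are `C ≥ 1` and `δ ∈ (0,1)`, depending only on `f`, such that whenever
`(η,v) ∈ H¹ × L²` and `‖η‖_{L^∞} ≤ δ`, one has
`(1/C)(‖η‖²_{H¹} + ‖v‖²_{L²}) ≤ E(η,v) ≤ C(‖η‖²_{H¹} + ‖v‖²_{L²})`. -/
theorem energy_equiv_norm_near_vacuum
    (f : ℝ → ℝ) (hf : ContDiffOn ℝ 1 f (Set.Ici 0)) (hf1 : f 1 = 0)
    (hf' : deriv f 1 < 0)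
    (hH1 : ∀ ρ ≥ (0:ℝ), soundSpeed f ^ 2 / 4 * (1 - ρ) ^ 2 ≤ Fprim f ρ) :
    ∃ C ≥ (1:ℝ), ∃ δ ∈ Set.Ioo (0:ℝ) 1,
      ∀ η v : ℝ → ℝ, Differentiable ℝ η →
        MemLp η 2 (volume : Measure ℝ) → MemLp (deriv η) 2 (volume : Measure ℝ) →
        MemLp v 2 (volume : Measure ℝ) →
        (∀ x : ℝ, |η x| ≤ δ) →
        (1 / C) * (l2sq η + l2sq (deriv η) + l2sq v) ≤ EGL f η v ∧
          EGL f η v ≤ C * (l2sq η + l2sq (deriv η) + l2sq v) := by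
  -- Basic facts about f near 1
  have hIoi : ContDiffOn ℝ 1 f (Set.Ioi 0) := hf.mono Set.Ioi_subset_Ici_self
  have hsub : Set.Icc (1/2:ℝ) (3/2) ⊆ Set.Ioi 0 := fun x hx => lt_of_lt_of_le (by norm_num) hx.1
  have hdiffat : ∀ x ∈ Set.Icc (1/2:ℝ) (3/2), DifferentiableAt ℝ f x := by
    intro x hx
    exact (hIoi.contDiffAt (Ioi_mem_nhds (hsub hx))).differentiableAt one_ne_zero
  have hderivc : ContinuousOn (deriv f) (Set.Icc (1/2:ℝ) (3/2)) :=
    (hIoi.continuousOn_deriv_of_isOpen isOpen_Ioi le_rfl).mono hsub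
  obtain ⟨K, hK⟩ := isCompact_Icc.exists_bound_of_continuousOn hderivc
  set K0 : ℝ := max K 1 with hK0def
  have hK0one : (1:ℝ) ≤ K0 := le_max_right _ _
  have hK0pos : (0:ℝ) < K0 := lt_of_lt_of_le one_pos hK0one
  have h1mem : (1:ℝ) ∈ Set.Icc (1/2:ℝ) (3/2) := by norm_num
  have hfb : ∀ r ∈ Set.Icc (1/2:ℝ) (3/2), |f r| ≤ K0 * |r - 1| := by
    intro r hr
    have := (convex_Icc (1/2:ℝ) (3/2)).norm_image_sub_le_of_norm_hasDerivWithin_le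
      (f' := deriv f) (C := K0) (fun x hx => (hdiffat x hx).hasDerivAt.hasDerivWithinAt)
      (fun x hx => le_trans (hK x hx) (le_max_left _ _)) h1mem hr
    simpa [hf1, Real.norm_eq_abs] using this
  -- the sound speed
  have hc2 : soundSpeed f ^ 2 = -2 * deriv f 1 := Real.sq_sqrt (by linarith)
  set a : ℝ := soundSpeed f ^ 2 / 4 with hadef
  have hapos : 0 < a := by rw [hadef, hc2]; linarith
  -- constants
  set m : ℝ := min (min (1/12) (1/4)) (a/2) with hmdef
  have hmpos : 0 < m := by
    apply lt_min (lt_min (by norm_num) (by norm_num)) (by linarith)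
  set M : ℝ := max (3/4) (K0/2) with hMdef
  set C : ℝ := max (max (1/m) M) 1 with hCdef
  have hC1 : (1:ℝ) ≤ C := le_max_right _ _
  have hCpos : (0:ℝ) < C := lt_of_lt_of_le one_pos hC1
  refine ⟨C, hC1, 1/2, by norm_num, ?_⟩
  intro η v hdη hmη hmd hmv hδ
  -- pointwise bounds on 1 - η
  have hlo : ∀ x, (1/2:ℝ) ≤ 1 - η x := fun x => by
    have := abs_le.1 (hδ x); linarith [this.2]
  have hhi : ∀ x, 1 - η x ≤ (3/2:ℝ) := fun x => by
    have := abs_le.1 (hδ x); linarith [this.1]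
  have hposx : ∀ x, (0:ℝ) < 1 - η x := fun x => lt_of_lt_of_le (by norm_num) (hlo x)
  have hmemIcc : ∀ x, 1 - η x ∈ Set.Icc (1/2:ℝ) (3/2) := fun x => ⟨hlo x, hhi x⟩
  -- integrability
  have hη2 : Integrable (fun x => η x ^ 2) := hmη.integrable_sq
  have hd2 : Integrable (fun x => deriv η x ^ 2) := hmd.integrable_sq
  have hv2 : Integrable (fun x => v x ^ 2) := hmv.integrable_sq
  have hηc : Continuous η := hdη.continuous
  have hsubc : Continuous (fun x => 1 - η x) := continuous_const.sub hηc
  -- term 1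
  have hg1m : AEStronglyMeasurable (fun x => deriv η x ^ 2 / (1 - η x)) volume := by
    have hinv : Continuous (fun x => (1 - η x)⁻¹) := hsubc.inv₀ fun x => (hposx x).ne'
    exact (hd2.aestronglyMeasurable.mul hinv.aestronglyMeasurable).congr
      (Eventually.of_forall fun x => by simp [div_eq_mul_inv])
  have hg1lo : ∀ x, (2/3) * deriv η x ^ 2 ≤ deriv η x ^ 2 / (1 - η x) := by
    intro x
    rw [le_div_iff₀ (hposx x)]
    nlinarith [sq_nonneg (deriv η x), hhi x]
  have hg1hi : ∀ x, deriv η x ^ 2 / (1 - η x) ≤ 2 * deriv η x ^ 2 := by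
    intro x
    rw [div_le_iff₀ (hposx x)]
    nlinarith [sq_nonneg (deriv η x), hlo x]
  have hg1int : Integrable (fun x => deriv η x ^ 2 / (1 - η x)) := by
    refine (hd2.const_mul 2).mono hg1m (Eventually.of_forall fun x => ?_)
    have h0 : (0:ℝ) ≤ deriv η x ^ 2 / (1 - η x) := div_nonneg (sq_nonneg _) (hposx x).le
    rw [Real.norm_eq_abs, Real.norm_eq_abs, abs_of_nonneg h0,
      abs_of_nonneg (by positivity : (0:ℝ) ≤ 2 * deriv η x ^ 2)]
    exact hg1hi x
  -- term 2
  have hg2m : AEStronglyMeasurable (fun x => (1 - η x) * v x ^ 2) volume :=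
    hsubc.aestronglyMeasurable.mul hv2.aestronglyMeasurable
  have hg2lo : ∀ x, (1/2) * v x ^ 2 ≤ (1 - η x) * v x ^ 2 := fun x =>
    mul_le_mul_of_nonneg_right (hlo x) (sq_nonneg _)
  have hg2hi : ∀ x, (1 - η x) * v x ^ 2 ≤ (3/2) * v x ^ 2 := fun x =>
    mul_le_mul_of_nonneg_right (hhi x) (sq_nonneg _)
  have hg2int : Integrable (fun x => (1 - η x) * v x ^ 2) := by
    refine (hv2.const_mul (3/2)).mono hg2m (Eventually.of_forall fun x => ?_)
    have h0 : (0:ℝ) ≤ (1 - η x) * v x ^ 2 := mul_nonneg (hposx x).le (sq_nonneg _)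
    rw [Real.norm_eq_abs, Real.norm_eq_abs, abs_of_nonneg h0,
      abs_of_nonneg (by positivity : (0:ℝ) ≤ (3/2:ℝ) * v x ^ 2)]
    exact hg2hi x
  -- term 3
  have hg3hi : ∀ x, |Fprim f (1 - η x)| ≤ K0 * η x ^ 2 := by
    intro x
    have hI : ∀ r ∈ Set.uIoc (1 - η x) 1, ‖f r‖ ≤ K0 * |η x| := by
      intro r hr
      have hrI : r ∈ Set.Icc (1/2:ℝ) (3/2) := by
        have h1 := Set.uIoc_subset_uIcc hr
        rcases Set.mem_uIcc.1 h1 with h | h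
        · constructor <;> [linarith [h.1, hlo x]; linarith [h.2]]
        · constructor <;> [linarith [h.1]; linarith [h.2, hhi x]]
      refine le_trans (hfb r hrI) (mul_le_mul_of_nonneg_left ?_ hK0pos.le)
      have h1 := Set.uIoc_subset_uIcc hr
      rcases Set.mem_uIcc.1 h1 with h | h
      · rw [abs_le]; constructor
        · have := abs_le.1 (le_refl |η x|); nlinarith [abs_nonneg (η x), neg_abs_le (η x), h.1]
        · nlinarith [h.2, le_abs_self (η x), neg_abs_le (η x), h.1]
      · rw [abs_le]; constructor <;> nlinarith [h.1, h.2, le_abs_self (η x), neg_abs_le (η x)]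
    have := intervalIntegral.norm_integral_le_of_norm_le_const hI
    rw [Real.norm_eq_abs] at this
    calc |Fprim f (1 - η x)| ≤ K0 * |η x| * |1 - (1 - η x)| := this
      _ = K0 * η x ^ 2 := by rw [show (1 - (1 - η x)) = η x by ring]; rw [sq]
                             rw [mul_assoc, abs_mul_abs_self]
  have hg3lo : ∀ x, a * η x ^ 2 ≤ Fprim f (1 - η x) := by
    intro x
    have h0 : (0:ℝ) ≤ 1 - η x := (hposx x).le
    have := hH1 (1 - η x) h0
    rw [show (1 - (1 - η x)) = η x by ring] at this
    exact this
  -- continuity and integrability of the Fprim term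
  have hFlip : ∀ b ∈ Set.Icc (1/2:ℝ) (3/2), ∀ c ∈ Set.Icc (1/2:ℝ) (3/2),
      |Fprim f b - Fprim f c| ≤ K0 * |b - c| := by
    intro b hb c hc
    have hfc : ContinuousOn f (Set.Icc (1/2:ℝ) (3/2)) :=
      fun x hx => ((hdiffat x hx).continuousAt).continuousWithinAt
    have hibc : IntervalIntegrable f volume c b :=
      (hfc.mono (Set.uIcc_subset_Icc hc hb)).intervalIntegrable
    have hib1 : IntervalIntegrable f volume b 1 :=
      (hfc.mono (Set.uIcc_subset_Icc hb h1mem)).intervalIntegrable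
    have hadd : (∫ r in c..b, f r) + (∫ r in b..1, f r) = ∫ r in c..1, f r :=
      intervalIntegral.integral_add_adjacent_intervals hibc hib1
    have hdiff2 : Fprim f b - Fprim f c = -(∫ r in c..b, f r) := by
      simp only [Fprim]; linarith [hadd]
    rw [hdiff2, abs_neg]
    have hI : ∀ r ∈ Set.uIoc c b, ‖f r‖ ≤ K0 := by
      intro r hr
      have hrI : r ∈ Set.Icc (1/2:ℝ) (3/2) :=
        Set.uIcc_subset_Icc hc hb (Set.uIoc_subset_uIcc hr)
      refine le_trans (hfb r hrI) ?_
      have : |r - 1| ≤ 1/2 := by rw [abs_le]; constructor <;> [linarith [hrI.1]; linarith [hrI.2]]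
      nlinarith
    have h2 := intervalIntegral.norm_integral_le_of_norm_le_const hI
    rw [Real.norm_eq_abs] at h2
    exact h2
  have hg3c : Continuous (fun x => Fprim f (1 - η x)) := by
    have hlipF : LipschitzOnWith (Real.toNNReal K0) (Fprim f) (Set.Icc (1/2:ℝ) (3/2)) := by
      refine LipschitzOnWith.of_dist_le_mul fun b hb c hc => ?_
      rw [Real.dist_eq, Real.dist_eq, Real.coe_toNNReal K0 hK0pos.le]
      exact hFlip b hb c hc
    exact hlipF.continuousOn.comp_continuous hsubc hmemIcc
  have hg3int : Integrable (fun x => Fprim f (1 - η x)) := by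
    refine (hη2.const_mul K0).mono hg3c.aestronglyMeasurable (Eventually.of_forall fun x => ?_)
    rw [Real.norm_eq_abs, Real.norm_eq_abs,
      abs_of_nonneg (by positivity : (0:ℝ) ≤ K0 * η x ^ 2)]
    exact hg3hi x
  -- integral comparisons
  have hI1lo : (2/3) * l2sq (deriv η) ≤ ∫ x : ℝ, deriv η x ^ 2 / (1 - η x) := by
    rw [l2sq, ← MeasureTheory.integral_const_mul]
    exact integral_mono (hd2.const_mul _) hg1int hg1lo
  have hI1hi : (∫ x : ℝ, deriv η x ^ 2 / (1 - η x)) ≤ 2 * l2sq (deriv η) := by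
    rw [l2sq, ← MeasureTheory.integral_const_mul]
    exact integral_mono hg1int (hd2.const_mul _) hg1hi
  have hI2lo : (1/2) * l2sq v ≤ ∫ x : ℝ, (1 - η x) * v x ^ 2 := by
    rw [l2sq, ← MeasureTheory.integral_const_mul]
    exact integral_mono (hv2.const_mul _) hg2int hg2lo
  have hI2hi : (∫ x : ℝ, (1 - η x) * v x ^ 2) ≤ (3/2) * l2sq v := by
    rw [l2sq, ← MeasureTheory.integral_const_mul]
    exact integral_mono hg2int (hv2.const_mul _) hg2hi
  have hI3lo : a * l2sq η ≤ ∫ x : ℝ, Fprim f (1 - η x) := by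
    rw [l2sq, ← MeasureTheory.integral_const_mul]
    exact integral_mono (hη2.const_mul _) hg3int hg3lo
  have hI3hi : (∫ x : ℝ, Fprim f (1 - η x)) ≤ K0 * l2sq η := by
    rw [l2sq, ← MeasureTheory.integral_const_mul]
    exact integral_mono hg3int (hη2.const_mul _) fun x => le_trans (le_abs_self _) (hg3hi x)
  -- nonnegativity of the norms
  have hnη : 0 ≤ l2sq η := integral_nonneg fun x => sq_nonneg _
  have hnd : 0 ≤ l2sq (deriv η) := integral_nonneg fun x => sq_nonneg _
  have hnv : 0 ≤ l2sq v := integral_nonneg fun x => sq_nonneg _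
  have hSnn : 0 ≤ l2sq η + l2sq (deriv η) + l2sq v := by linarith
  have hElo : m * (l2sq η + l2sq (deriv η) + l2sq v) ≤ EGL f η v := by
    have hm1 : m ≤ 1/12 := le_trans (min_le_left _ _) (min_le_left _ _)
    have hm2 : m ≤ 1/4 := le_trans (min_le_left _ _) (min_le_right _ _)
    have hm3 : m ≤ a/2 := min_le_right _ _
    have p1 : m * l2sq η ≤ (a/2) * l2sq η := mul_le_mul_of_nonneg_right hm3 hnη
    have p2 : m * l2sq (deriv η) ≤ (1/12) * l2sq (deriv η) :=
      mul_le_mul_of_nonneg_right hm1 hnd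
    have p3 : m * l2sq v ≤ (1/4) * l2sq v := mul_le_mul_of_nonneg_right hm2 hnv
    simp only [EGL]
    linarith [hI1lo, hI2lo, hI3lo]
  have hEhi : EGL f η v ≤ M * (l2sq η + l2sq (deriv η) + l2sq v) := by
    have hM1 : (3/4:ℝ) ≤ M := le_max_left _ _
    have hM2 : K0/2 ≤ M := le_max_right _ _
    have p1 : (K0/2) * l2sq η ≤ M * l2sq η := mul_le_mul_of_nonneg_right hM2 hnη
    have p2 : (1/4:ℝ) * l2sq (deriv η) ≤ M * l2sq (deriv η) :=
      mul_le_mul_of_nonneg_right (by linarith) hnd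
    have p3 : (3/4:ℝ) * l2sq v ≤ M * l2sq v := mul_le_mul_of_nonneg_right hM1 hnv
    simp only [EGL]
    linarith [hI1hi, hI2hi, hI3hi]
  constructor
  · refine le_trans ?_ hElo
    have h1C : 1/C ≤ m := by
      rw [div_le_iff₀ hCpos]
      have : 1/m ≤ C := le_trans (le_max_left _ _) (le_max_left _ _)
      rw [div_le_iff₀ hmpos] at this
      linarith [mul_comm m C ▸ this]
    exact mul_le_mul_of_nonneg_right h1C hSnn
  · refine le_trans hEhi ?_
    have : M ≤ C := le_trans (le_max_right _ _) (le_max_left _ _)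
    exact mul_le_mul_of_nonneg_right this hSnn


end
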